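/- For every complex number x and every natural number n, the sum over k from 0 to n of x^k * (L_k + (x-2) * F_{k+1}) equals x^(n+1) * F_{n+1}, where F and L are the Fibonacci and Lucas numbers. -/
import Mathlib

open Finset

noncomputable def fibC : ℕ → ℂ
  | 0 => 0
  | 1 => 1
  | n + 2 => fibC (n + 1) + fibC n

noncomputable def lucasC : ℕ → ℂ
  | 0 => 2
  | 1 => 1
  | n + 2 => lucasC (n + 1) + lucasC n

lemma lucas_eq (n : ℕ) : lucasC n = 2 * fibC (n + 1) - fibC n := by
  induction n using Nat.twoStepInduction with
  | zero => simp [lucasC, fibC]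
  | one => simp [lucasC, fibC]; ring
  | more n ih1 ih2 =>
    have h : fibC (n + 2 + 1) = fibC (n + 1 + 1) + fibC (n + 1) := rfl
    have h2 : fibC (n + 2) = fibC (n + 1) + fibC n := rfl
    rw [lucasC, ih1, ih2, h, h2]
    ring

theorem stmt0 (x : ℂ) (n : ℕ) :
    ∑ k ∈ Finset.range (n + 1), x ^ k * (lucasC k + (x - 2) * fibC (k + 1)) =
      x ^ (n + 1) * fibC (n + 1) := by
  induction n with
  | zero => simp [lucasC, fibC]
  | succ n ih =>
    rw [Finset.sum_range_succ, ih, lucas_eq, show n+1+1 = n+2 from rfl, fibC]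
    ring
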